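/- For sequences f, g : ℕ → ℝ, the following inverse relation holds: (for all n, f_n = Σ_{k=0}^{n} w_{m,r}[n,k]_q · g_k) if and only if (for all n, g_n = Σ_{k=0}^{n} W_{m,r}[n,k]_q · f_k). -/

import Mathlib

open Finset

/-- The `q`-integer `[s]_q = (q^s - 1)/(q - 1)` for an integer `s`. -/
noncomputable def qint (q : ℝ) (s : ℤ) : ℝ := (q ^ s - 1) / (q - 1)

/-- The `(q,r)`-Whitney numbers of the second kind `W_{m,r}[n,k]_q`, with `r : ℤ` so
that both `W_{m,r}` and `W_{m,-r}` are covered: `W[0,0] = 1`, `W[n,k] = 0` for `k > n`,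
and `W[n,k] = q^(m(k-1)+r) W[n-1,k-1] + [mk+r]_q W[n-1,k]`. -/
noncomputable def qWhitney2 (q : ℝ) (m : ℕ) (r : ℤ) : ℕ → ℕ → ℝ
  | 0, 0 => 1
  | 0, _ + 1 => 0
  | n + 1, 0 => qint q r * qWhitney2 q m r n 0
  | n + 1, k + 1 =>
      q ^ (m * k + r) * qWhitney2 q m r n k
        + qint q (m * (k + 1) + r) * qWhitney2 q m r n (k + 1)

/-! Put `p_k = ∏_{i<k} q^{-(mi+r)} (X - [mi+r]_q)`. The recursion defining `W` is exactly
`X p_k = q^{mk+r} p_{k+1} + [mk+r]_q p_k`, so `X^n = ∑ W[n,k] p_k`, while `p_n = ∑ w[n,k] X^k`.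
Applying the linear functional `L` with `L(X^k) = g_k` to both expansions gives
`L(p_n) = ∑ w[n,k] g_k` and `g_n = ∑ W[n,k] L(p_k)`. Since `W[n,n] ≠ 0`, the triangular system
`g_n = ∑ W[n,k] f_k` determines `f`, so any `f` satisfying it is `n ↦ L(p_n)`. -/

open Polynomial

section InverseRelation

variable {R : Type*} [CommRing R]

noncomputable def momentFunctional (g : ℕ → R) : R[X] →ₗ[R] R :=
  lsum fun k => LinearMap.id.smulRight (g k)

@[simp]
lemma momentFunctional_C_mul_X_pow (g : ℕ → R) (c : R) (k : ℕ) :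
    momentFunctional g (C c * X ^ k) = c * g k := by
  simp [momentFunctional, C_mul_X_pow_eq_monomial, sum_monomial_index]

lemma momentFunctional_X_pow (g : ℕ → R) (k : ℕ) : momentFunctional g (X ^ k) = g k := by
  simpa using momentFunctional_C_mul_X_pow g 1 k

lemma eq_of_forall_sum_range_mul_eq [IsDomain R] {a : ℕ → ℕ → R} (ha : ∀ n, a n n ≠ 0) {f f' : ℕ → R}
    (h : ∀ n, ∑ k ∈ range (n + 1), a n k * f k = ∑ k ∈ range (n + 1), a n k * f' k) :
    f = f' := by
  funext n
  induction n using Nat.strong_induction_on with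
  | _ n ih =>
    have hn := h n
    rw [sum_range_succ, sum_range_succ,
      sum_congr rfl fun k hk => by rw [ih k (mem_range.1 hk)], add_right_inj] at hn
    exact mul_left_cancel₀ (ha n) hn

theorem inverse_relation_of_basis_change [IsDomain R] (a b : ℕ → ℕ → R) (P : ℕ → R[X])
    (hP : ∀ n, P n = ∑ k ∈ range (n + 1), C (b n k) * X ^ k)
    (hX : ∀ n, (X : R[X]) ^ n = ∑ k ∈ range (n + 1), C (a n k) * P k)
    (ha : ∀ n, a n n ≠ 0) (f g : ℕ → R) :
    (∀ n, f n = ∑ k ∈ range (n + 1), b n k * g k) ↔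
      (∀ n, g n = ∑ k ∈ range (n + 1), a n k * f k) := by
  set L := momentFunctional g
  have hLP : ∀ n, L (P n) = ∑ k ∈ range (n + 1), b n k * g k := fun n => by
    simp [L, hP n, map_sum]
  have hg : ∀ n, g n = ∑ k ∈ range (n + 1), a n k * L (P k) := fun n => by
    rw [← momentFunctional_X_pow g n, hX n, map_sum]
    simp [L, ← smul_eq_C_mul]
  constructor
  · intro hf n
    simpa only [hf, hLP] using hg n
  · intro hf n
    have hfL : f = fun k => L (P k) :=
      eq_of_forall_sum_range_mul_eq ha fun n => (hf n).symm.trans (hg n)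
    rw [hfL]
    exact hLP n

end InverseRelation

section qWhitney

noncomputable def qWhitneyBasis (q : ℝ) (m : ℕ) (r : ℤ) (k : ℕ) : ℝ[X] :=
  ∏ i ∈ range k, C (q ^ (-(m * i + r : ℤ))) * (X - C (qint q (m * i + r)))

variable {q : ℝ} {m : ℕ} {r : ℤ}

lemma qWhitney2_eq_zero_of_lt {n k : ℕ} (h : n < k) : qWhitney2 q m r n k = 0 := by
  induction n generalizing k with
  | zero => obtain ⟨k, rfl⟩ := Nat.exists_eq_succ_of_ne_zero h.ne'; rfl
  | succ n ih =>
    obtain ⟨k, rfl⟩ := Nat.exists_eq_succ_of_ne_zero (Nat.ne_zero_of_lt h)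
    rw [qWhitney2, ih (by omega), ih (by omega), mul_zero, mul_zero, add_zero]

lemma qWhitney2_self_ne_zero (hq : q ≠ 0) (n : ℕ) : qWhitney2 q m r n n ≠ 0 := by
  induction n with
  | zero => simp [qWhitney2]
  | succ n ih =>
    rw [qWhitney2, qWhitney2_eq_zero_of_lt (Nat.lt_succ_self n), mul_zero, add_zero]
    exact mul_ne_zero (zpow_ne_zero _ hq) ih


lemma X_mul_qWhitneyBasis (hq : q ≠ 0) (k : ℕ) :
    X * qWhitneyBasis q m r k =
      C (q ^ (m * k + r : ℤ)) * qWhitneyBasis q m r (k + 1)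
        + C (qint q (m * k + r)) * qWhitneyBasis q m r k := by
  have hC : C (q ^ (m * k + r : ℤ)) * C (q ^ (-(m * k + r : ℤ))) = 1 := by
    rw [← C_mul, ← zpow_add₀ hq, add_neg_cancel, zpow_zero, C_1]
  rw [show qWhitneyBasis q m r (k + 1) = qWhitneyBasis q m r k * _ from prod_range_succ _ _]
  linear_combination -(X - C (qint q (m * k + r))) * qWhitneyBasis q m r k * hC

lemma X_pow_eq_sum_qWhitney2_mul_qWhitneyBasis (hq : q ≠ 0) (n : ℕ) :
    (X : ℝ[X]) ^ n = ∑ k ∈ range (n + 1), C (qWhitney2 q m r n k) * qWhitneyBasis q m r k := by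
  induction n with
  | zero => simp [qWhitney2, qWhitneyBasis]
  | succ n ih =>
    set p := qWhitneyBasis q m r
    set h : ℕ → ℝ[X] := fun k => C (qint q (m * k + r)) * C (qWhitney2 q m r n k) * p k
    have hshift : ∑ k ∈ range (n + 1), h k = ∑ k ∈ range (n + 1), h (k + 1) + h 0 := by
      rw [← sum_range_succ', sum_range_succ _ (n + 1)]
      simp [h, qWhitney2_eq_zero_of_lt (Nat.lt_succ_self n)]
    rw [pow_succ', ih, mul_sum, sum_range_succ' _ (n + 1)]
    simp only [qWhitney2, C_add, C_mul, add_mul, sum_add_distrib]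
    have hX : ∀ k, X * (C (qWhitney2 q m r n k) * p k) =
        C (q ^ (m * k + r : ℤ)) * C (qWhitney2 q m r n k) * p (k + 1) + h k := fun k => by
      rw [mul_left_comm, X_mul_qWhitneyBasis hq]
      ring
    simp only [hX, sum_add_distrib, hshift, h]
    push_cast
    simp only [mul_zero, zero_add, add_assoc]

end qWhitney

theorem qWhitney_inverse_relation_general (q : ℝ) (hq : 0 < q) (m r : ℕ)
    (w : ℕ → ℕ → ℝ)
    (hw : ∀ (n : ℕ) (x : ℝ),
      ∏ i ∈ Finset.range n, (q ^ (-((r : ℤ) + i * m)) * (x - qint q ((r : ℤ) + i * m))) =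
        ∑ k ∈ Finset.range (n + 1), w n k * x ^ k)
    (f g : ℕ → ℝ) :
    (∀ n : ℕ, f n = ∑ k ∈ Finset.range (n + 1), w n k * g k) ↔
      (∀ n : ℕ, g n = ∑ k ∈ Finset.range (n + 1), qWhitney2 q m (r : ℤ) n k * f k) := by
  refine inverse_relation_of_basis_change _ w (qWhitneyBasis q m r) (fun n => ?_)
    (X_pow_eq_sum_qWhitney2_mul_qWhitneyBasis hq.ne') (qWhitney2_self_ne_zero hq.ne') f g
  refine Polynomial.funext fun x => ?_
  simp only [qWhitneyBasis, eval_prod, eval_finsetSum, eval_mul, eval_C, eval_sub, eval_X,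
    eval_pow, ← hw n x]
  refine prod_congr rfl fun i _ => ?_
  rw [show (m * i + r : ℤ) = r + i * m by ring]

theorem qWhitney_inverse_relation (q : ℝ) (hq : 0 < q) (hq1 : q ≠ 1) (m r : ℕ) (hm : 0 < m) (hr : 0 < r)
    (w : ℕ → ℕ → ℝ)
    (hw : ∀ (n : ℕ) (x : ℝ),
      ∏ i ∈ Finset.range n, (q ^ (-((r : ℤ) + i * m)) * (x - qint q ((r : ℤ) + i * m))) =
        ∑ k ∈ Finset.range (n + 1), w n k * x ^ k)
    (f g : ℕ → ℝ) :
    (∀ n : ℕ, f n = ∑ k ∈ Finset.range (n + 1), w n k * g k) ↔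
      (∀ n : ℕ, g n = ∑ k ∈ Finset.range (n + 1), qWhitney2 q m (r : ℤ) n k * f k) :=
  qWhitney_inverse_relation_general q hq m r w hw f g
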